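/- Let p be a prime with p ≡ 7 (mod 8). Over the ring F₄+uF₄, the quadratic residue circulant matrix Q_p(u, 1+ω, ω+uω) satisfies Q_p(u, 1+ω, ω+uω) · Q_p(u, 1+ω, ω+uω)^T = I_p. -/

import Mathlib

/-!
Write `Q = (a - c) I + c J + (b - c) S`, where `J` is the all-ones matrix and `S` is the
adjacency matrix of the Paley tournament on `𝔽_q`, `q ≡ 3 (mod 4)`. As `-1` is a non-square,
`S + Sᵀ = J - I`; every row of `S` has `(q - 1) / 2` ones; and
`S Sᵀ = ((q + 1) / 4) I + ((q - 3) / 4) J`, the off-diagonal entries being counted by the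
Jacobsthal sum `∑ χ(x) χ(x - d) = -1`. Hence `Q Qᵀ` is a combination of `I` and `J`. For
`p ≡ 7 (mod 8)` over `F₄ + uF₄`, where `2 = 0`, `u² = 0` and `ω² = ω + 1`, its coefficients
are `1` and `0`.
-/

noncomputable section

open Matrix
open scoped Classical

/-- The quadratic residue circulant matrix `Q_p(a,b,c)`: the `p × p` circulant matrix
(indexed by `ZMod p`) whose `(i,j)` entry is `a` if `j - i = 0`, `b` if `j - i` is a
nonzero quadratic residue modulo `p`, and `c` if `j - i` is a quadratic non-residue. -/
def Qcirc {R : Type*} [CommRing R] (p : ℕ) (a b c : R) :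
    Matrix (ZMod p) (ZMod p) R :=
  Matrix.of fun i j =>
    if j - i = 0 then a else if IsSquare (j - i) then b else c

/-- The field `F₄` with four elements. -/
abbrev F4 := GaloisField 2 2

/-- The ring `F₄ + u F₄ = F₄[u]/(u²)`. -/
abbrev R4 := DualNumber F4

open Finset

section QuadraticChar

variable {F : Type*} [Field F] [Fintype F]

lemma ringChar_ne_two_of_card_mod_four_eq_three (hF : Fintype.card F % 4 = 3) :
    ringChar F ≠ 2 := fun h => by
  have := FiniteField.even_card_iff_char_two.mp h
  omega

variable [DecidableEq F]

lemma quadraticChar_neg_of_card_mod_four_eq_three (hF : Fintype.card F % 4 = 3) (x : F) :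
    quadraticChar F (-x) = -quadraticChar F x := by
  have h : quadraticChar F (-1) = -1 :=
    quadraticChar_neg_one_iff_not_isSquare.mpr (by rw [FiniteField.isSquare_neg_one_iff]; omega)
  rw [neg_eq_neg_one_mul, map_mul, h, neg_one_mul]

/-- Substituting `x = d y` turns this Jacobsthal sum into `χ(-1) J(χ, χ)`, and
`J(χ, χ) = J(χ, χ⁻¹) = -χ(-1)`. -/
lemma sum_quadraticChar_mul_quadraticChar_sub (hF : ringChar F ≠ 2) {d : F} (hd : d ≠ 0) :
    ∑ x, quadraticChar F x * quadraticChar F (x - d) = -1 := by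
  set χ := quadraticChar F
  have hJ : jacobiSum χ χ = -χ (-1) := by
    simpa only [(quadraticChar_isQuadratic F).inv] using
      jacobiSum_nontrivial_inv (quadraticChar_ne_one hF)
  calc ∑ x, χ x * χ (x - d) = ∑ y, χ (d * y) * χ (d * y - d) :=
        (Fintype.sum_equiv (Equiv.mulLeft₀ d hd) _ _ fun _ => rfl).symm
    _ = ∑ y, χ d ^ 2 * χ (-1) * (χ y * χ (1 - y)) := by
        refine sum_congr rfl fun y _ => ?_
        rw [show d * y - d = d * (-1) * (1 - y) by ring, map_mul, map_mul, map_mul]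
        ring
    _ = -1 := by
        rw [← mul_sum, ← jacobiSum, hJ, quadraticChar_sq_one hd, one_mul, mul_neg,
          ← sq, quadraticChar_sq_one (neg_ne_zero.mpr one_ne_zero)]

lemma two_mul_card_quadraticChar_eq_one_add_one (hF : ringChar F ≠ 2) :
    2 * #{x : F | quadraticChar F x = 1} + 1 = Fintype.card F := by
  have key : ∀ x : F, 1 + quadraticChar F x =
      2 * (if quadraticChar F x = 1 then 1 else 0) + (if x = 0 then 1 else 0) := by
    intro x
    rcases eq_or_ne x 0 with rfl | hx
    · simp
    · rcases quadraticChar_dichotomy hx with h | h <;> simp [h, hx]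
  have := sum_congr rfl fun x (_ : x ∈ univ) => key x
  simp only [sum_add_distrib, ← mul_sum, sum_boole, filter_eq', mem_univ, if_true, card_singleton,
    sum_const, card_univ, quadraticChar_sum_zero hF, nsmul_one, add_zero] at this
  exact_mod_cast this.symm

lemma four_mul_card_quadraticChar_eq_one_and_sub_add_three (hF : Fintype.card F % 4 = 3)
    {d : F} (hd : d ≠ 0) :
    4 * #{x : F | quadraticChar F x = 1 ∧ quadraticChar F (x - d) = 1} + 3 =
      Fintype.card F := by
  have hF2 := ringChar_ne_two_of_card_mod_four_eq_three hF
  have key : ∀ x : F, (1 + quadraticChar F x) * (1 + quadraticChar F (x - d)) =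
      4 * (if quadraticChar F x = 1 ∧ quadraticChar F (x - d) = 1 then 1 else 0) +
        (if x = 0 then 1 + quadraticChar F (-d) else 0) +
        (if x = d then 1 + quadraticChar F d else 0) := by
    intro x
    rcases eq_or_ne x 0 with rfl | hx
    · simp [hd.symm]
    rcases eq_or_ne x d with rfl | hxd
    · simp [hx]
    have hxd' : x - d ≠ 0 := sub_ne_zero.mpr hxd
    rcases quadraticChar_dichotomy hx with h | h <;>
      rcases quadraticChar_dichotomy hxd' with h' | h' <;> simp [h, h', hx, hxd]
  have hshift : ∑ x, quadraticChar F (x - d) = 0 := by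
    rw [← quadraticChar_sum_zero hF2]
    exact Fintype.sum_equiv (Equiv.subRight d) _ _ fun _ => rfl
  have := sum_congr rfl fun x (_ : x ∈ univ) => key x
  simp only [add_mul, mul_add, one_mul, mul_one, sum_add_distrib, ← mul_sum, sum_boole,
    sum_ite_eq', mem_univ, if_true, sum_const, card_univ, quadraticChar_sum_zero hF2, hshift,
    sum_quadraticChar_mul_quadraticChar_sub hF2 hd,
    quadraticChar_neg_of_card_mod_four_eq_three hF] at this
  have : (4 * #{x : F | quadraticChar F x = 1 ∧ quadraticChar F (x - d) = 1} + 3 : ℤ) =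
      Fintype.card F := by
    linear_combination -this
  exact_mod_cast this

end QuadraticChar

section Paley

def allOnes (n R : Type*) [One R] : Matrix n n R := of fun _ _ => 1

lemma transpose_allOnes {n R : Type*} [One R] : (allOnes n R)ᵀ = allOnes n R := rfl

lemma allOnes_mul_allOnes {n R : Type*} [Fintype n] [NonAssocSemiring R] :
    allOnes n R * allOnes n R = Fintype.card n • allOnes n R := by
  ext i j
  simp [allOnes, mul_apply]

variable (F R : Type*) [Field F] [Fintype F] [DecidableEq F] [CommRing R]

def paleyMatrix : Matrix F F R := of fun i j => if quadraticChar F (j - i) = 1 then 1 else 0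

variable {F R}

lemma paleyMatrix_add_transpose (hF : Fintype.card F % 4 = 3) :
    paleyMatrix F R + (paleyMatrix F R)ᵀ = allOnes F R - 1 := by
  ext i j
  simp only [paleyMatrix, allOnes, Matrix.add_apply, transpose_apply, of_apply, Matrix.sub_apply,
    one_apply]
  rcases eq_or_ne i j with rfl | hij
  · simp
  · rw [← neg_sub j i, quadraticChar_neg_of_card_mod_four_eq_three hF]
    rcases quadraticChar_dichotomy (sub_ne_zero.mpr hij.symm) with h | h <;> simp [h, hij]

lemma paleyMatrix_mul_allOnes (hF : ringChar F ≠ 2) :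
    paleyMatrix F R * allOnes F R = ((Fintype.card F - 1) / 2) • allOnes F R := by
  ext i j
  have hcard := two_mul_card_quadraticChar_eq_one_add_one hF
  calc (paleyMatrix F R * allOnes F R) i j
      = ∑ l, if quadraticChar F (l - i) = 1 then (1 : R) else 0 := by
        simp only [paleyMatrix, allOnes, mul_apply, of_apply, mul_one]
    _ = ∑ x, if quadraticChar F x = 1 then (1 : R) else 0 :=
        Fintype.sum_equiv (Equiv.subRight i) _ _ fun _ => rfl
    _ = (((Fintype.card F - 1) / 2) • allOnes F R) i j := by
        rw [sum_boole, Matrix.smul_apply, allOnes, of_apply, nsmul_one]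
        congr 1
        omega

lemma paleyMatrix_mul_transpose (hF : Fintype.card F % 4 = 3) :
    paleyMatrix F R * (paleyMatrix F R)ᵀ =
      ((Fintype.card F + 1) / 4) • 1 + ((Fintype.card F - 3) / 4) • allOnes F R := by
  ext i j
  calc (paleyMatrix F R * (paleyMatrix F R)ᵀ) i j
      = ∑ l, if quadraticChar F (l - i) = 1 ∧ quadraticChar F (l - j) = 1 then (1 : R) else 0 := by
        simp only [paleyMatrix, mul_apply, transpose_apply, of_apply, ite_zero_mul_ite_zero,
          mul_one]
    _ = ∑ x, if quadraticChar F x = 1 ∧ quadraticChar F (x - (j - i)) = 1 then (1 : R) else 0 :=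
        Fintype.sum_equiv (Equiv.subRight i) _ _ fun l => by simp
    _ = _ := by
        rw [sum_boole, Matrix.add_apply, Matrix.smul_apply, Matrix.smul_apply, one_apply, allOnes,
          of_apply]
        rcases eq_or_ne i j with rfl | hij
        · have hcard := two_mul_card_quadraticChar_eq_one_add_one
            (ringChar_ne_two_of_card_mod_four_eq_three hF)
          simp only [sub_self, sub_zero, and_self, if_true, nsmul_one, ← Nat.cast_add]
          congr 1
          omega
        · have hcard := four_mul_card_quadraticChar_eq_one_and_sub_add_three hF
            (sub_ne_zero.mpr hij.symm)
          simp only [hij, if_false, smul_zero, zero_add, nsmul_one]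
          congr 1
          omega

end Paley

section Qcirc

variable {R : Type*} [CommRing R] {p : ℕ} [Fact p.Prime]

lemma qcirc_eq_paleyMatrix (a b c : R) :
    Qcirc p a b c = (a - c) • 1 + c • allOnes (ZMod p) R + (b - c) • paleyMatrix (ZMod p) R := by
  ext i j
  simp only [Qcirc, paleyMatrix, allOnes, Matrix.add_apply, Matrix.smul_apply, one_apply, of_apply,
    smul_eq_mul]
  rcases eq_or_ne (j - i) 0 with h | h
  · simp [(sub_eq_zero.mp h).symm]
  · simp only [quadraticChar_one_iff_isSquare h, if_neg h,
      if_neg (fun hij : i = j => h (by rw [hij, sub_self]))]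
    split_ifs <;> ring

theorem qcirc_mul_transpose (hp : p % 4 = 3) (a b c : R) :
    Qcirc p a b c * (Qcirc p a b c)ᵀ =
      ((a - c) * (a - b) + ((p + 1) / 4 : ℕ) * (b - c) ^ 2) • 1 +
      (a * (b + c) + (p - 2) * b * c + ((p - 3) / 4 : ℕ) * (b - c) ^ 2) • allOnes (ZMod p) R := by
  have hF : Fintype.card (ZMod p) % 4 = 3 := by rwa [ZMod.card]
  have hsum := paleyMatrix_add_transpose (R := R) hF
  have hSJ := paleyMatrix_mul_allOnes (R := R) (ringChar_ne_two_of_card_mod_four_eq_three hF)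
  have hJS : allOnes (ZMod p) R * (paleyMatrix (ZMod p) R)ᵀ =
      ((Fintype.card (ZMod p) - 1) / 2) • allOnes (ZMod p) R := by
    rw [← transpose_allOnes, ← transpose_mul, hSJ, transpose_smul, transpose_allOnes]
  have hSS := paleyMatrix_mul_transpose (R := R) hF
  have hJJ := allOnes_mul_allOnes (n := ZMod p) (R := R)
  simp only [ZMod.card] at hSJ hJS hSS hJJ
  have hk : (((p - 1) / 2 : ℕ) : R) * 2 = p - 1 := by
    rw [eq_sub_iff_add_eq]
    exact_mod_cast congr_arg Nat.cast (by omega : (p - 1) / 2 * 2 + 1 = p)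
  rw [qcirc_eq_paleyMatrix, transpose_add, transpose_add, transpose_smul, transpose_smul,
    transpose_smul, transpose_one, transpose_allOnes]
  simp only [add_mul, mul_add, smul_mul_smul_comm, one_mul, mul_one, hJJ, hSJ, hJS, hSS]
  linear_combination (norm := module)
    ((a - c) * (b - c)) • hsum + (c * (b - c)) • hk • allOnes (ZMod p) R

end Qcirc

/-- For a prime `p ≡ 7 (mod 8)` and `ω` a root of `x² + x + 1` in `F₄ + u F₄`
(necessarily `ω ∈ F₄`), the quadratic residue circulant matrix
`Q_p(u, 1 + ω, ω + uω)` satisfies `Q · Qᵀ = I_p`. -/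
theorem qcirc_mul_transpose_eq_one_of_mod_eight_eq_seven
    (p : ℕ) [NeZero p] (hp : Nat.Prime p) (h7 : p % 8 = 7)
    (ω : R4) (hω : ω ^ 2 + ω + 1 = 0) :
    Qcirc p (DualNumber.eps : R4) (1 + ω) (ω + DualNumber.eps * ω) *
      (Qcirc p (DualNumber.eps : R4) (1 + ω) (ω + DualNumber.eps * ω))ᵀ = 1 := by
  have := Fact.mk hp
  have : CharP R4 2 := charP_of_injective_algebraMap TrivSqZeroExt.inl_injective 2
  have hu : (DualNumber.eps : R4) * DualNumber.eps = 0 := DualNumber.eps_mul_eps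
  have h2 : (2 : R4) = 0 := CharTwo.two_eq_zero
  have hcast (n : ℕ) : (n : R4) = (n % 2 : ℕ) := CharP.cast_eq_mod R4 2 n
  rw [qcirc_mul_transpose (by omega), hcast p, hcast ((p + 1) / 4), hcast ((p - 3) / 4),
    show p % 2 = 1 by omega, show (p + 1) / 4 % 2 = 0 by omega, show (p - 3) / 4 % 2 = 1 by omega]
  convert_to (1 : R4) • (1 : Matrix (ZMod p) (ZMod p) R4) + (0 : R4) • allOnes (ZMod p) R4 = 1
    using 3
  · push_cast
    linear_combination (DualNumber.eps - 1) * hω + (1 - ω) * hu +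
      (ω + ω ^ 2 - DualNumber.eps * ω - DualNumber.eps) * h2
  · push_cast
    linear_combination (-1 - DualNumber.eps) * hω + (ω + ω ^ 2) * hu + (1 + DualNumber.eps) * h2
  · simp
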